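/- Let μ_k be a sequence of finite positive Borel measures on a compact metric space X, all with the same total mass V_k → V. Suppose for every m ∈ ℕ there exist a closed set S_m ⊂ X, measures ν_k^m with μ_k ≤ 𝟙_{S_m} μ_k + ν_k^m, limsup_k μ_k(S_m) ≤ 1/m, and ν_k^m ⇀ ν^m weakly as k → ∞ with ν^m ⇀ ν as m → ∞, where ν(X) = V. Then μ_k ⇀ ν weakly. -/

import Mathlib

open MeasureTheory Filter Topology

/-!
Testing against `f + ‖f‖` and `-f + ‖f‖` and using the convergence of the total masses, it
suffices to show that every nonnegative bounded continuous `g` satisfies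
`∫ g dμ_k < b` eventually whenever `∫ g dν < b`. The domination gives
`∫ g dμ_k ≤ ‖g‖ μ_k(S_m) + ∫ g dν_k^m`; choose `m` so that `2‖g‖/m + ∫ g dν^m < b`, then let
`k → ∞` using `limsup_k μ_k(S_m) ≤ 1/m` and `ν_k^m ⇀ ν^m`.
-/

namespace BoundedContinuousFunction

variable {X : Type*} [TopologicalSpace X] [MeasurableSpace X] [OpensMeasurableSpace X]

lemma integral_le_measureReal_mul_norm_add_integral {μ ρ : Measure X} [IsFiniteMeasure μ]
    [IsFiniteMeasure ρ] {S : Set X} (hμ : μ ≤ μ.restrict S + ρ) {g : X →ᵇ ℝ} (hg : 0 ≤ g) :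
    ∫ x, g x ∂μ ≤ μ.real S * ‖g‖ + ∫ x, g x ∂ρ :=
  calc ∫ x, g x ∂μ
      ≤ ∫ x, g x ∂(μ.restrict S + ρ) :=
        integral_mono_measure hμ (Eventually.of_forall hg) (g.integrable _)
    _ = ∫ x, g x ∂(μ.restrict S) + ∫ x, g x ∂ρ :=
        integral_add_measure (g.integrable _) (g.integrable _)
    _ ≤ μ.real S * ‖g‖ + ∫ x, g x ∂ρ := by
        gcongr
        simpa using (le_abs_self _).trans (g.norm_integral_le_mul_norm (μ.restrict S))

lemma eventually_integral_lt_of_le_restrict_add {ι κ : Type*} {l : Filter ι} {L : Filter κ}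
    [L.NeBot] {μ : ι → Measure X} [∀ i, IsFiniteMeasure (μ i)] {ν : Measure X}
    {S : κ → Set X} {ρ : κ → ι → Measure X} [∀ m i, IsFiniteMeasure (ρ m i)]
    {ρlim : κ → Measure X} {ε : κ → ℝ}
    (hdom : ∀ m i, μ i ≤ (μ i).restrict (S m) + ρ m i)
    (hS : ∀ᶠ m in L, ∀ᶠ i in l, (μ i).real (S m) ≤ ε m) (hε : Tendsto ε L (𝓝 0))
    {g : X →ᵇ ℝ} (hg : 0 ≤ g)
    (hρ : ∀ m, Tendsto (fun i => ∫ x, g x ∂(ρ m i)) l (𝓝 (∫ x, g x ∂(ρlim m))))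
    (hρlim : Tendsto (fun m => ∫ x, g x ∂(ρlim m)) L (𝓝 (∫ x, g x ∂ν)))
    {b : ℝ} (hb : ∫ x, g x ∂ν < b) :
    ∀ᶠ i in l, ∫ x, g x ∂(μ i) < b := by
  have hbound : Tendsto (fun m => ε m * ‖g‖ + ∫ x, g x ∂(ρlim m)) L (𝓝 (∫ x, g x ∂ν)) := by
    simpa using (hε.mul_const ‖g‖).add hρlim
  obtain ⟨m, hSm, hm⟩ := (hS.and (hbound.eventually (gt_mem_nhds hb))).exists
  have hρm : ∀ᶠ i in l, ∫ x, g x ∂(ρ m i) < b - ε m * ‖g‖ :=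
    (hρ m).eventually (gt_mem_nhds (by linarith))
  filter_upwards [hSm, hρm] with i hSi hρi
  calc ∫ x, g x ∂(μ i)
      ≤ (μ i).real (S m) * ‖g‖ + ∫ x, g x ∂(ρ m i) :=
        integral_le_measureReal_mul_norm_add_integral (hdom m i) hg
    _ ≤ ε m * ‖g‖ + ∫ x, g x ∂(ρ m i) := by gcongr
    _ < b := by linarith

variable {ι : Type*} {l : Filter ι} {μ : ι → Measure X} [∀ i, IsFiniteMeasure (μ i)]
  {ν : Measure X} [IsFiniteMeasure ν]

lemma eventually_integral_lt_of_forall_nonneg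
    (hmass : Tendsto (fun i => (μ i).real Set.univ) l (𝓝 (ν.real Set.univ)))
    (h : ∀ g : X →ᵇ ℝ, 0 ≤ g → ∀ b, ∫ x, g x ∂ν < b → ∀ᶠ i in l, ∫ x, g x ∂(μ i) < b)
    (f : X →ᵇ ℝ) {b : ℝ} (hb : ∫ x, f x ∂ν < b) :
    ∀ᶠ i in l, ∫ x, f x ∂(μ i) < b := by
  set η := b - ∫ x, f x ∂ν
  have hshift := h _ f.add_norm_nonneg (∫ x, f x ∂ν + ν.real Set.univ * ‖f‖ + η / 2)
    (by rw [integral_add_const, smul_eq_mul]; linarith)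
  have hmass' : ∀ᶠ i in l, ν.real Set.univ * ‖f‖ - η / 2 < (μ i).real Set.univ * ‖f‖ :=
    (hmass.mul_const ‖f‖).eventually (lt_mem_nhds (by linarith))
  filter_upwards [hshift, hmass'] with i hi hmi
  rw [integral_add_const, smul_eq_mul] at hi
  linarith

lemma tendsto_integral_of_forall_nonneg
    (hmass : Tendsto (fun i => (μ i).real Set.univ) l (𝓝 (ν.real Set.univ)))
    (h : ∀ g : X →ᵇ ℝ, 0 ≤ g → ∀ b, ∫ x, g x ∂ν < b → ∀ᶠ i in l, ∫ x, g x ∂(μ i) < b)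
    (f : X →ᵇ ℝ) :
    Tendsto (fun i => ∫ x, f x ∂(μ i)) l (𝓝 (∫ x, f x ∂ν)) := by
  refine tendsto_order.2 ⟨fun a ha => ?_, fun b hb => eventually_integral_lt_of_forall_nonneg
    hmass h f hb⟩
  have := eventually_integral_lt_of_forall_nonneg hmass h (-f) (b := -a)
    (by simpa [integral_neg] using ha)
  simpa [integral_neg] using this

end BoundedContinuousFunction

open BoundedContinuousFunction in
theorem weak_convergence_from_tail_estimates_general {X : Type*} [MetricSpace X] [CompactSpace X]
    [MeasurableSpace X] [BorelSpace X]
    (μ : ℕ → Measure X) [∀ k, IsFiniteMeasure (μ k)]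
    (ν : Measure X) [IsFiniteMeasure ν] (V : ℝ) (Vk : ℕ → ℝ)
    (hVk : ∀ k, (μ k Set.univ).toReal = Vk k)
    (hV : Tendsto Vk atTop (𝓝 V))
    (hνV : (ν Set.univ).toReal = V)
    (S : ℕ → Set X) (νkm : ℕ → ℕ → Measure X) [∀ m k, IsFiniteMeasure (νkm m k)]
    (νm : ℕ → Measure X)
    (hdom : ∀ m k, μ k ≤ (μ k).restrict (S m) + νkm m k)
    (htail : ∀ m : ℕ, 1 ≤ m → limsup (fun k => (μ k (S m)).toReal) atTop ≤ 1 / (m : ℝ))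
    (hweak_k : ∀ m, ∀ f : C(X, ℝ),
      Tendsto (fun k => ∫ x, f x ∂(νkm m k)) atTop (𝓝 (∫ x, f x ∂(νm m))))
    (hweak_m : ∀ f : C(X, ℝ),
      Tendsto (fun m => ∫ x, f x ∂(νm m)) atTop (𝓝 (∫ x, f x ∂ν))) :
    ∀ f : C(X, ℝ), Tendsto (fun k => ∫ x, f x ∂(μ k)) atTop (𝓝 (∫ x, f x ∂ν)) := by
  have hmass : Tendsto (fun k => (μ k).real Set.univ) atTop (𝓝 (ν.real Set.univ)) := by
    simpa only [measureReal_def, hVk, hνV] using hV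
  have hS : ∀ᶠ m in atTop, ∀ᶠ k in atTop, (μ k).real (S m) ≤ 2 / (m : ℝ) := by
    filter_upwards [eventually_ge_atTop 1] with m hm
    have hbdd : IsBoundedUnder (· ≤ ·) atTop fun k => (μ k (S m)).toReal :=
      hV.isBoundedUnder_le.mono_le <| Eventually.of_forall fun k =>
        hVk k ▸ measureReal_mono (Set.subset_univ _)
    have hm' : 1 / (m : ℝ) < 2 / m :=
      div_lt_div_of_pos_right one_lt_two (by exact_mod_cast hm)
    exact (eventually_lt_of_limsup_lt ((htail m hm).trans_lt hm') hbdd).mono fun k hk => hk.le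
  intro f
  exact tendsto_integral_of_forall_nonneg hmass (fun g hg b hb =>
    eventually_integral_lt_of_le_restrict_add hdom hS (tendsto_const_div_atTop_nhds_zero_nat 2)
      hg (fun m => hweak_k m g.toContinuousMap) (hweak_m g.toContinuousMap) hb) (mkOfCompact f)

/-- abstract final step of the proof of weak convergence of Bergman
measures. If finite measures `μ_k` on a compact metric space, of total masses
`V_k → V`, satisfy: for every `m ≥ 1` there are a closed set `S m`, measures `ν_k^m`
with `μ_k ≤ 𝟙_{S m} μ_k + ν_k^m`, `limsup_k μ_k (S m) ≤ 1/m`, `ν_k^m ⇀ ν^m` as `k → ∞`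
and `ν^m ⇀ ν` as `m → ∞`, where `ν X = V`, then `μ_k ⇀ ν` weakly. -/
theorem weak_convergence_from_tail_estimates {X : Type*} [MetricSpace X] [CompactSpace X]
    [MeasurableSpace X] [BorelSpace X]
    (μ : ℕ → Measure X) [∀ k, IsFiniteMeasure (μ k)]
    (ν : Measure X) [IsFiniteMeasure ν] (V : ℝ) (Vk : ℕ → ℝ)
    (hVk : ∀ k, (μ k Set.univ).toReal = Vk k)
    (hV : Tendsto Vk atTop (𝓝 V))
    (hνV : (ν Set.univ).toReal = V)
    (S : ℕ → Set X) (νkm : ℕ → ℕ → Measure X) [∀ m k, IsFiniteMeasure (νkm m k)]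
    (νm : ℕ → Measure X) [∀ m, IsFiniteMeasure (νm m)]
    (hclosed : ∀ m, IsClosed (S m))
    (hdom : ∀ m k, μ k ≤ (μ k).restrict (S m) + νkm m k)
    (htail : ∀ m : ℕ, 1 ≤ m → limsup (fun k => (μ k (S m)).toReal) atTop ≤ 1 / (m : ℝ))
    (hweak_k : ∀ m, ∀ f : C(X, ℝ),
      Tendsto (fun k => ∫ x, f x ∂(νkm m k)) atTop (𝓝 (∫ x, f x ∂(νm m))))
    (hweak_m : ∀ f : C(X, ℝ),
      Tendsto (fun m => ∫ x, f x ∂(νm m)) atTop (𝓝 (∫ x, f x ∂ν))) :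
    ∀ f : C(X, ℝ), Tendsto (fun k => ∫ x, f x ∂(μ k)) atTop (𝓝 (∫ x, f x ∂ν)) :=
  weak_convergence_from_tail_estimates_general μ ν V Vk hVk hV hνV S νkm νm hdom htail hweak_k
    hweak_m
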